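/- Let G be a vertex-weighted graph with positive weights, let v be a vertex with w(v) ≤ w(u) for all u ∈ N[v], and let G' be the vertex-weighted graph obtained from G by the modified weighted struction applied at v. Then α_w(G) = α_w(G') + w(v). -/

import Mathlib

/-!
Modified weighted struction: applied at a vertex `v` whose weight is minimum
in its closed neighborhood.  It removes `v`, lowers the weight of every
neighbor of `v` by `w v`, adds a new vertex `v_{x,y}` of weight `w y` for
every pair of non-adjacent neighbors `x < y` of `v`, connects every neighbor
`k` of `v` to every new vertex `v_{x,y}` with `x ≠ k`, and turns `N(v)` into
a clique.
-/

open scoped Classical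

variable {V : Type*}

/-- `I` is an independent set of `G`. -/
def IsIndep (G : SimpleGraph V) (I : Finset V) : Prop :=
  ∀ x ∈ I, ∀ y ∈ I, ¬ G.Adj x y

/-- The weighted independence number of `G` with weights `w`: the supremum
(for a finite graph, the maximum) of the weights of independent sets. -/
noncomputable def alphaW (G : SimpleGraph V) (w : V → ℝ) : ℝ :=
  sSup {r : ℝ | ∃ I : Finset V, IsIndep G I ∧ r = ∑ x ∈ I, w x}

/-- Old vertices of the struction at `v`: all vertices except `v`. -/
abbrev StrOld (v : V) : Type _ := {u : V // u ≠ v}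

/-- New vertices of the struction at `v`: pairs of non-adjacent neighbors
`x < y` of `v` (with respect to the fixed linear order on the vertices). -/
abbrev StrNew [LinearOrder V] (G : SimpleGraph V) (v : V) : Type _ :=
  {p : V × V // G.Adj v p.1 ∧ G.Adj v p.2 ∧ p.1 < p.2 ∧ ¬ G.Adj p.1 p.2}

/-- Adjacency for the modified weighted struction at `v`:
the edges of the original struction, plus an edge between each neighbor `k`
of `v` and each new vertex `v_{x,y}` with `x ≠ k`, plus all edges making
`N(v)` a clique. -/
def modRel [LinearOrder V] (G : SimpleGraph V) (v : V) :
    StrOld v ⊕ StrNew G v → StrOld v ⊕ StrNew G v → Prop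
  | Sum.inl u, Sum.inl u' => G.Adj u.val u'.val ∨ (G.Adj v u.val ∧ G.Adj v u'.val)
  | Sum.inl u, Sum.inr p =>
      G.Adj u.val p.val.1 ∨ G.Adj u.val p.val.2 ∨ (G.Adj v u.val ∧ u.val ≠ p.val.1)
  | Sum.inr p, Sum.inl u =>
      G.Adj u.val p.val.1 ∨ G.Adj u.val p.val.2 ∨ (G.Adj v u.val ∧ u.val ≠ p.val.1)
  | Sum.inr p, Sum.inr q => p.val.1 ≠ q.val.1 ∨ G.Adj p.val.2 q.val.2

/-- The graph obtained from `G` by the modified weighted struction at `v`. -/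
def modStruction [LinearOrder V] (G : SimpleGraph V) (v : V) :
    SimpleGraph (StrOld v ⊕ StrNew G v) :=
  SimpleGraph.fromRel (modRel G v)

/-- Weights after the modified struction: neighbors of `v` have their weight
lowered by `w v`, other old vertices keep their weight, and each new vertex
`v_{x,y}` has weight `w y`. -/
noncomputable def modWeight [LinearOrder V] (G : SimpleGraph V) (w : V → ℝ) (v : V) :
    StrOld v ⊕ StrNew G v → ℝ
  | Sum.inl u => if G.Adj v u.val then w u.val - w v else w u.val
  | Sum.inr p => w p.val.2

section AuxAlpha
variable {α : Type*} [Fintype α]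

lemma bddAbove_indepSums (G : SimpleGraph α) (w : α → ℝ) :
    BddAbove {r : ℝ | ∃ I : Finset α, IsIndep G I ∧ r = ∑ x ∈ I, w x} := by
  apply Set.Finite.bddAbove
  apply Set.Finite.subset (Set.finite_range (fun I : Finset α => ∑ x ∈ I, w x))
  rintro r ⟨I, -, rfl⟩
  exact ⟨I, rfl⟩

lemma indep_sum_le_alphaW (G : SimpleGraph α) (w : α → ℝ) {I : Finset α}
    (h : IsIndep G I) : ∑ x ∈ I, w x ≤ alphaW G w :=
  le_csSup (bddAbove_indepSums G w) ⟨I, h, rfl⟩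

omit [Fintype α] in
lemma alphaW_le (G : SimpleGraph α) (w : α → ℝ) {c : ℝ}
    (h : ∀ I : Finset α, IsIndep G I → ∑ x ∈ I, w x ≤ c) : alphaW G w ≤ c := by
  refine csSup_le ⟨0, ∅, fun x hx => absurd hx (Finset.notMem_empty x), by simp⟩ ?_
  rintro r ⟨I, hI, rfl⟩
  exact h I hI

end AuxAlpha

section Adj
variable [LinearOrder V] {G : SimpleGraph V} {v : V}

lemma mS_ll_elim {u u' : StrOld v}
    (h : (modStruction G v).Adj (Sum.inl u) (Sum.inl u')) :
    G.Adj u.1 u'.1 ∨ (G.Adj v u.1 ∧ G.Adj v u'.1) := by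
  rw [modStruction, SimpleGraph.fromRel_adj] at h
  simp only [modRel] at h
  rcases h.2 with (h' | ⟨h1, h2⟩) | (h' | ⟨h1, h2⟩)
  · exact Or.inl h'
  · exact Or.inr ⟨h1, h2⟩
  · exact Or.inl h'.symm
  · exact Or.inr ⟨h2, h1⟩

lemma mS_lr_elim {u : StrOld v} {p : StrNew G v}
    (h : (modStruction G v).Adj (Sum.inl u) (Sum.inr p)) :
    G.Adj u.1 p.1.1 ∨ G.Adj u.1 p.1.2 ∨ (G.Adj v u.1 ∧ u.1 ≠ p.1.1) := by
  rw [modStruction, SimpleGraph.fromRel_adj] at h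
  simp only [modRel] at h
  rcases h.2 with h' | h' <;> exact h'

lemma mS_rl_elim {u : StrOld v} {p : StrNew G v}
    (h : (modStruction G v).Adj (Sum.inr p) (Sum.inl u)) :
    G.Adj u.1 p.1.1 ∨ G.Adj u.1 p.1.2 ∨ (G.Adj v u.1 ∧ u.1 ≠ p.1.1) := by
  rw [modStruction, SimpleGraph.fromRel_adj] at h
  simp only [modRel] at h
  rcases h.2 with h' | h' <;> exact h'

lemma mS_rr_elim {p q : StrNew G v}
    (h : (modStruction G v).Adj (Sum.inr p) (Sum.inr q)) :
    p.1.1 ≠ q.1.1 ∨ G.Adj p.1.2 q.1.2 := by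
  rw [modStruction, SimpleGraph.fromRel_adj] at h
  simp only [modRel] at h
  rcases h.2 with (h' | h') | (h' | h')
  · exact Or.inl h'
  · exact Or.inr h'
  · exact Or.inl h'.symm
  · exact Or.inr h'.symm

lemma mS_of_ll {u u' : StrOld v} (h : G.Adj u.1 u'.1) :
    (modStruction G v).Adj (Sum.inl u) (Sum.inl u') := by
  rw [modStruction, SimpleGraph.fromRel_adj]
  refine ⟨fun e => h.ne (congrArg Subtype.val (by injection e)), Or.inl ?_⟩
  simp only [modRel]
  exact Or.inl h

lemma mS_of_lr₁ {u : StrOld v} {p : StrNew G v} (h : G.Adj u.1 p.1.1) :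
    (modStruction G v).Adj (Sum.inl u) (Sum.inr p) := by
  rw [modStruction, SimpleGraph.fromRel_adj]
  exact ⟨Sum.inl_ne_inr, Or.inl (Or.inl h)⟩

lemma mS_of_lr₂ {u : StrOld v} {p : StrNew G v} (h : G.Adj u.1 p.1.2) :
    (modStruction G v).Adj (Sum.inl u) (Sum.inr p) := by
  rw [modStruction, SimpleGraph.fromRel_adj]
  exact ⟨Sum.inl_ne_inr, Or.inl (Or.inr (Or.inl h))⟩

lemma mS_of_lr₃ {u : StrOld v} {p : StrNew G v} (h1 : G.Adj v u.1) (h2 : u.1 ≠ p.1.1) :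
    (modStruction G v).Adj (Sum.inl u) (Sum.inr p) := by
  rw [modStruction, SimpleGraph.fromRel_adj]
  exact ⟨Sum.inl_ne_inr, Or.inl (Or.inr (Or.inr ⟨h1, h2⟩))⟩

lemma mS_of_rr₁ {p q : StrNew G v} (h : p.1.1 ≠ q.1.1) :
    (modStruction G v).Adj (Sum.inr p) (Sum.inr q) := by
  rw [modStruction, SimpleGraph.fromRel_adj]
  exact ⟨fun e => h (by injection e with e; rw [e]), Or.inl (Or.inl h)⟩

lemma mS_of_rr₂ {p q : StrNew G v} (h : G.Adj p.1.2 q.1.2) :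
    (modStruction G v).Adj (Sum.inr p) (Sum.inr q) := by
  rw [modStruction, SimpleGraph.fromRel_adj]
  refine ⟨fun e => h.ne ?_, Or.inl (Or.inr h)⟩
  injection e with e; rw [e]

end Adj

theorem partA [Fintype V] [LinearOrder V]
    (G : SimpleGraph V) (w : V → ℝ) (hw : ∀ u, 0 < w u) (v : V)
    (hv : ∀ u, (u = v ∨ G.Adj v u) → w v ≤ w u) :
    alphaW G w ≤ alphaW (modStruction G v) (modWeight G w v) + w v := by
  set G' := modStruction G v with hG'
  set w' := modWeight G w v with hw'def
  have hwv : 0 < w v := hw v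
  have hfun : ∀ u : StrOld v, w' (Sum.inl u) = if G.Adj v u.1 then w u.1 - w v else w u.1 :=
    fun u => rfl
  apply alphaW_le
  intro I hI
  suffices h : ∃ I' : Finset (StrOld v ⊕ StrNew G v),
      IsIndep G' I' ∧ ∑ x ∈ I, w x ≤ (∑ a ∈ I', w' a) + w v by
    obtain ⟨I', h1, h2⟩ := h
    have := indep_sum_le_alphaW G' w' h1
    linarith
  by_cases hvI : v ∈ I
  · -- v ∈ I : drop v, map the rest to old vertices
    have hnbr : ∀ u ∈ I, ¬ G.Adj v u := fun u hu => hI v hvI u hu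
    refine ⟨(I.erase v).attach.image
        (fun u => Sum.inl ⟨u.1, (Finset.mem_erase.mp u.2).1⟩), ?_, ?_⟩
    · intro a ha b hb hadj
      simp only [Finset.mem_image, Finset.mem_attach, true_and] at ha hb
      obtain ⟨u, rfl⟩ := ha
      obtain ⟨u', rfl⟩ := hb
      rcases mS_ll_elim hadj with h | ⟨h, -⟩
      · exact hI _ (Finset.mem_of_mem_erase u.2) _ (Finset.mem_of_mem_erase u'.2) h
      · exact hnbr _ (Finset.mem_of_mem_erase u.2) h
    · have hinj : ∀ a ∈ (I.erase v).attach, ∀ b ∈ (I.erase v).attach,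
          (Sum.inl ⟨a.1, (Finset.mem_erase.mp a.2).1⟩ : StrOld v ⊕ StrNew G v)
            = Sum.inl ⟨b.1, (Finset.mem_erase.mp b.2).1⟩ → a = b := by
        intro a _ b _ h
        simp only [Sum.inl.injEq, Subtype.mk.injEq] at h
        exact Subtype.ext h
      rw [Finset.sum_image hinj]
      have e1 : ∑ u ∈ (I.erase v).attach,
          w' (Sum.inl ⟨u.1, (Finset.mem_erase.mp u.2).1⟩) = ∑ u ∈ I.erase v, w u := by
        rw [← Finset.sum_attach (I.erase v) w]
        refine Finset.sum_congr rfl fun u _ => ?_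
        rw [hfun, if_neg (hnbr _ (Finset.mem_of_mem_erase u.2))]
      rw [e1, Finset.sum_erase_add I w hvI]
  · set A := I.filter (fun u => G.Adj v u) with hAdef
    rcases Finset.eq_empty_or_nonempty A with hAe | hAne
    · -- no neighbor of v in I
      have hnbr : ∀ u ∈ I, ¬ G.Adj v u := by
        intro u hu hadj
        have : u ∈ A := Finset.mem_filter.mpr ⟨hu, hadj⟩
        rw [hAe] at this
        exact absurd this (Finset.notMem_empty u)
      refine ⟨I.attach.image (fun u => Sum.inl ⟨u.1, fun e => hvI (e ▸ u.2)⟩), ?_, ?_⟩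
      · intro a ha b hb hadj
        simp only [Finset.mem_image, Finset.mem_attach, true_and] at ha hb
        obtain ⟨u, rfl⟩ := ha
        obtain ⟨u', rfl⟩ := hb
        rcases mS_ll_elim hadj with h | ⟨h, -⟩
        · exact hI _ u.2 _ u'.2 h
        · exact hnbr _ u.2 h
      · have hinj : ∀ a ∈ I.attach, ∀ b ∈ I.attach,
            (Sum.inl ⟨a.1, fun e => hvI (e ▸ a.2)⟩ : StrOld v ⊕ StrNew G v)
              = Sum.inl ⟨b.1, fun e => hvI (e ▸ b.2)⟩ → a = b := by
          intro a _ b _ h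
          simp only [Sum.inl.injEq, Subtype.mk.injEq] at h
          exact Subtype.ext h
        rw [Finset.sum_image hinj]
        have e1 : ∑ u ∈ I.attach,
            w' (Sum.inl ⟨u.1, fun e => hvI (e ▸ u.2)⟩) = ∑ u ∈ I, w u := by
          rw [← Finset.sum_attach I w]
          refine Finset.sum_congr rfl fun u _ => ?_
          rw [hfun, if_neg (hnbr _ u.2)]
        rw [e1]
        linarith
    · -- at least one neighbor of v in I
      set x₁ := A.min' hAne with hx₁def
      have hx₁A : x₁ ∈ A := A.min'_mem hAne
      have hx₁I : x₁ ∈ I := (Finset.mem_filter.mp hx₁A).1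
      have hx₁adj : G.Adj v x₁ := (Finset.mem_filter.mp hx₁A).2
      set C := A.erase x₁ with hCdef
      set B := I \ C with hBdef
      have hCsub : C ⊆ I := fun y hy => (Finset.mem_filter.mp (Finset.mem_of_mem_erase hy)).1
      have hBsub : B ⊆ I := Finset.sdiff_subset
      have hBne : ∀ u : V, u ∈ B → u ≠ v := fun u hu e => hvI (e ▸ hBsub hu)
      have hCprop : ∀ y : V, y ∈ C →
          G.Adj v x₁ ∧ G.Adj v y ∧ x₁ < y ∧ ¬ G.Adj x₁ y := by
        intro y hy
        have hyA : y ∈ A := Finset.mem_of_mem_erase hy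
        have hyI : y ∈ I := (Finset.mem_filter.mp hyA).1
        have hyne : y ≠ x₁ := (Finset.mem_erase.mp hy).1
        exact ⟨hx₁adj, (Finset.mem_filter.mp hyA).2,
          lt_of_le_of_ne (A.min'_le y hyA) hyne.symm, hI x₁ hx₁I y hyI⟩
      have hx₁B : x₁ ∈ B := Finset.mem_sdiff.mpr
        ⟨hx₁I, fun h => (Finset.mem_erase.mp h).1 rfl⟩
      have hBnoadj : ∀ u : V, u ∈ B → u ≠ x₁ → ¬ G.Adj v u := by
        intro u hu hne hadj
        have huA : u ∈ A := Finset.mem_filter.mpr ⟨hBsub hu, hadj⟩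
        exact (Finset.mem_sdiff.mp hu).2 (Finset.mem_erase.mpr ⟨hne, huA⟩)
      refine ⟨(B.attach.image fun u =>
            (Sum.inl ⟨u.1, hBne u.1 u.2⟩ : StrOld v ⊕ StrNew G v)) ∪
          (C.attach.image fun y => Sum.inr ⟨(x₁, y.1), (hCprop y.1 y.2).1,
            (hCprop y.1 y.2).2.1, (hCprop y.1 y.2).2.2.1, (hCprop y.1 y.2).2.2.2⟩),
          ?_, ?_⟩
      · intro a ha b hb hadj
        simp only [Finset.mem_union, Finset.mem_image, Finset.mem_attach, true_and]
          at ha hb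
        rcases ha with ⟨u, rfl⟩ | ⟨y, rfl⟩ <;> rcases hb with ⟨u', rfl⟩ | ⟨y', rfl⟩
        · rcases mS_ll_elim hadj with h | ⟨h1, h2⟩
          · exact hI _ (hBsub u.2) _ (hBsub u'.2) h
          · have e1 : u.1 = x₁ := by
              by_contra hne; exact hBnoadj u.1 u.2 hne h1
            have e2 : u'.1 = x₁ := by
              by_contra hne; exact hBnoadj u'.1 u'.2 hne h2
            exact hadj.ne (by rw [Sum.inl.injEq, Subtype.mk.injEq, e1, e2])
        · rcases mS_lr_elim hadj with h | h | ⟨h1, h2⟩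
          · exact hI _ (hBsub u.2) _ hx₁I h
          · exact hI _ (hBsub u.2) _ (hCsub y'.2) h
          · exact hBnoadj u.1 u.2 h2 h1
        · rcases mS_rl_elim hadj with h | h | ⟨h1, h2⟩
          · exact hI _ (hBsub u'.2) _ hx₁I h
          · exact hI _ (hBsub u'.2) _ (hCsub y.2) h
          · exact hBnoadj u'.1 u'.2 h2 h1
        · rcases mS_rr_elim hadj with h | h
          · exact h rfl
          · exact hI _ (hCsub y.2) _ (hCsub y'.2) h
      · have hdisj : Disjoint
            (B.attach.image fun u =>
              (Sum.inl ⟨u.1, hBne u.1 u.2⟩ : StrOld v ⊕ StrNew G v))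
            (C.attach.image fun y => (Sum.inr ⟨(x₁, y.1), (hCprop y.1 y.2).1,
              (hCprop y.1 y.2).2.1, (hCprop y.1 y.2).2.2.1, (hCprop y.1 y.2).2.2.2⟩ :
              StrOld v ⊕ StrNew G v)) := by
          rw [Finset.disjoint_left]
          rintro a ha hb
          simp only [Finset.mem_image, Finset.mem_attach, true_and] at ha hb
          obtain ⟨u, rfl⟩ := ha
          obtain ⟨y, h⟩ := hb
          exact Sum.inl_ne_inr h.symm
        rw [Finset.sum_union hdisj]
        have hinj1 : ∀ a ∈ B.attach, ∀ b ∈ B.attach,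
            (Sum.inl ⟨a.1, hBne a.1 a.2⟩ : StrOld v ⊕ StrNew G v)
              = Sum.inl ⟨b.1, hBne b.1 b.2⟩ → a = b := by
          intro a _ b _ h
          simp only [Sum.inl.injEq, Subtype.mk.injEq] at h
          exact Subtype.ext h
        have hinj2 : ∀ a ∈ C.attach, ∀ b ∈ C.attach,
            (Sum.inr ⟨(x₁, a.1), (hCprop a.1 a.2).1, (hCprop a.1 a.2).2.1,
                (hCprop a.1 a.2).2.2.1, (hCprop a.1 a.2).2.2.2⟩ :
              StrOld v ⊕ StrNew G v)
              = Sum.inr ⟨(x₁, b.1), (hCprop b.1 b.2).1, (hCprop b.1 b.2).2.1,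
                (hCprop b.1 b.2).2.2.1, (hCprop b.1 b.2).2.2.2⟩ → a = b := by
          intro a _ b _ h
          simp only [Sum.inr.injEq, Subtype.mk.injEq, Prod.mk.injEq, true_and] at h
          exact Subtype.ext h
        rw [Finset.sum_image hinj1, Finset.sum_image hinj2]
        have e2 : ∑ y ∈ C.attach, w' (Sum.inr ⟨(x₁, y.1), (hCprop y.1 y.2).1,
            (hCprop y.1 y.2).2.1, (hCprop y.1 y.2).2.2.1, (hCprop y.1 y.2).2.2.2⟩)
            = ∑ y ∈ C, w y := by
          rw [← Finset.sum_attach C w]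
          rfl
        have e1 : ∑ u ∈ B.attach, w' (Sum.inl ⟨u.1, hBne u.1 u.2⟩)
            = (∑ u ∈ B, w u) - w v := by
          have step : ∑ u ∈ B.attach, w' (Sum.inl ⟨u.1, hBne u.1 u.2⟩)
              = ∑ u ∈ B, (if G.Adj v u then w u - w v else w u) := by
            rw [← Finset.sum_attach B (fun u => if G.Adj v u then w u - w v else w u)]
            rfl
          rw [step, ← Finset.sum_erase_add B _ hx₁B, ← Finset.sum_erase_add B w hx₁B,
            if_pos hx₁adj]
          have : ∑ u ∈ B.erase x₁, (if G.Adj v u then w u - w v else w u)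
              = ∑ u ∈ B.erase x₁, w u := by
            refine Finset.sum_congr rfl fun u hu => ?_
            rw [if_neg (hBnoadj u (Finset.mem_of_mem_erase hu) (Finset.mem_erase.mp hu).1)]
          rw [this]
          ring
        rw [e1, e2]
        have : ∑ u ∈ B, w u + ∑ y ∈ C, w y = ∑ x ∈ I, w x := Finset.sum_sdiff hCsub
        linarith

theorem partB [Fintype V] [LinearOrder V]
    (G : SimpleGraph V) (w : V → ℝ) (hw : ∀ u, 0 < w u) (v : V)
    (hv : ∀ u, (u = v ∨ G.Adj v u) → w v ≤ w u) :
    alphaW (modStruction G v) (modWeight G w v) + w v ≤ alphaW G w := by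
  set G' := modStruction G v with hG'
  set w' := modWeight G w v with hw'def
  have hwv : 0 < w v := hw v
  have hfunl : ∀ u : StrOld v, w' (Sum.inl u) = if G.Adj v u.1 then w u.1 - w v else w u.1 :=
    fun u => rfl
  have key : alphaW G' w' ≤ alphaW G w - w v := by
    apply alphaW_le
    intro I' hI'
    suffices h : ∃ I : Finset V, IsIndep G I ∧ (∑ a ∈ I', w' a) + w v ≤ ∑ x ∈ I, w x by
      obtain ⟨I, h1, h2⟩ := h
      have := indep_sum_le_alphaW G w h1
      linarith
    set F : StrOld v ⊕ StrNew G v → V :=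
      Sum.elim (fun u => u.1) (fun p => p.1.2) with hF
    have hptle : ∀ a : StrOld v ⊕ StrNew G v, w' a ≤ w (F a) := by
      rintro (u | p)
      · rw [hfunl]
        simp only [hF, Sum.elim_inl]
        split <;> linarith
      · exact le_of_eq rfl
    by_cases hnew : ∃ p : StrNew G v, Sum.inr p ∈ I'
    · obtain ⟨p₀, hp₀⟩ := hnew
      set x := p₀.1.1 with hx
      have hxadj : G.Adj v x := p₀.2.1
      have hall : ∀ p : StrNew G v, Sum.inr p ∈ I' → p.1.1 = x := by
        intro p hp
        by_contra hne
        exact hI' _ hp _ hp₀ (mS_of_rr₁ hne)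
      have hinj : ∀ a ∈ I', ∀ b ∈ I', F a = F b → a = b := by
        rintro (u | p) ha (u' | q) hb hab <;>
          simp only [hF, Sum.elim_inl, Sum.elim_inr] at hab
        · exact congrArg Sum.inl (Subtype.ext hab)
        · exfalso
          have h1 : G.Adj v u.1 := by rw [hab]; exact q.2.2.1
          have h2 : u.1 ≠ q.1.1 := by rw [hab]; exact ne_of_gt q.2.2.2.1
          exact hI' _ ha _ hb (mS_of_lr₃ h1 h2)
        · exfalso
          have h1 : G.Adj v u'.1 := by rw [← hab]; exact p.2.2.1
          have h2 : u'.1 ≠ p.1.1 := by rw [← hab]; exact ne_of_gt p.2.2.2.1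
          exact hI' _ hb _ ha (mS_of_lr₃ h1 h2)
        · have h1 : p.1.1 = q.1.1 := (hall p ha).trans (hall q hb).symm
          exact congrArg Sum.inr (Subtype.ext (Prod.ext h1 hab))
      have himg : ∑ z ∈ I'.image F, w z = ∑ a ∈ I', w (F a) := Finset.sum_image hinj
      refine ⟨insert x (I'.image F), ?_, ?_⟩
      · intro z hz z' hz' hadj
        rcases Finset.mem_insert.mp hz with rfl | hz <;>
          rcases Finset.mem_insert.mp hz' with rfl | hz'
        · exact G.irrefl hadj
        · obtain ⟨a, haI, rfl⟩ := Finset.mem_image.mp hz'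
          rcases a with u | q <;> simp only [hF, Sum.elim_inl, Sum.elim_inr] at hadj
          · exact hI' _ haI _ hp₀ (mS_of_lr₁ hadj.symm)
          · exact q.2.2.2.2 (by rw [hall q haI]; exact hadj)
        · obtain ⟨a, haI, rfl⟩ := Finset.mem_image.mp hz
          rcases a with u | q <;> simp only [hF, Sum.elim_inl, Sum.elim_inr] at hadj
          · exact hI' _ haI _ hp₀ (mS_of_lr₁ hadj)
          · exact q.2.2.2.2 (by rw [hall q haI]; exact hadj.symm)
        · obtain ⟨a, haI, rfl⟩ := Finset.mem_image.mp hz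
          obtain ⟨b, hbI, rfl⟩ := Finset.mem_image.mp hz'
          rcases a with u | p <;> rcases b with u' | q <;>
            simp only [hF, Sum.elim_inl, Sum.elim_inr] at hadj
          · exact hI' _ haI _ hbI (mS_of_ll hadj)
          · exact hI' _ haI _ hbI (mS_of_lr₂ hadj)
          · exact hI' _ hbI _ haI (mS_of_lr₂ hadj.symm)
          · exact hI' _ haI _ hbI (mS_of_rr₂ hadj)
      · by_cases hxim : x ∈ I'.image F
        · obtain ⟨a, haI, hFa⟩ := Finset.mem_image.mp hxim
          have hax : ∃ u : StrOld v, a = Sum.inl u ∧ u.1 = x := by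
            rcases a with u | q
            · exact ⟨u, rfl, by simpa [hF] using hFa⟩
            · exfalso
              have h1 : q.1.1 = x := hall q haI
              have h2 : q.1.2 = x := by simpa [hF] using hFa
              have h3 := q.2.2.2.1
              rw [h1, h2] at h3
              exact lt_irrefl x h3
          obtain ⟨u, rfl, hux⟩ := hax
          rw [Finset.insert_eq_self.mpr hxim, himg]
          have hterm : w (F (Sum.inl u)) - w' (Sum.inl u) = w v := by
            rw [hfunl, if_pos (by rw [hux]; exact hxadj)]
            simp only [hF, Sum.elim_inl]
            ring
          have hle : w (F (Sum.inl u)) - w' (Sum.inl u)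
              ≤ ∑ a ∈ I', (w (F a) - w' a) :=
            Finset.single_le_sum (f := fun a => w (F a) - w' a) (fun a _ => sub_nonneg.mpr (hptle a)) haI
          have hsub : ∑ a ∈ I', (w (F a) - w' a)
              = ∑ a ∈ I', w (F a) - ∑ a ∈ I', w' a := Finset.sum_sub_distrib _ _
          linarith
        · rw [Finset.sum_insert hxim, himg]
          have hle : ∑ a ∈ I', w' a ≤ ∑ a ∈ I', w (F a) :=
            Finset.sum_le_sum fun a _ => hptle a
          have hwx : w v ≤ w x := hv x (Or.inr hxadj)
          linarith
    · push_neg at hnew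
      have honly : ∀ a ∈ I', ∃ u : StrOld v, a = Sum.inl u := by
        rintro (u | p) ha
        · exact ⟨u, rfl⟩
        · exact absurd ha (hnew p)
      have hinj : ∀ a ∈ I', ∀ b ∈ I', F a = F b → a = b := by
        intro a ha b hb hab
        obtain ⟨u, rfl⟩ := honly a ha
        obtain ⟨u', rfl⟩ := honly b hb
        simp only [hF, Sum.elim_inl] at hab
        exact congrArg Sum.inl (Subtype.ext hab)
      have himg : ∑ z ∈ I'.image F, w z = ∑ a ∈ I', w (F a) := Finset.sum_image hinj
      have himgind : IsIndep G (I'.image F) := by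
        intro z hz z' hz' hadj
        obtain ⟨a, haI, rfl⟩ := Finset.mem_image.mp hz
        obtain ⟨b, hbI, rfl⟩ := Finset.mem_image.mp hz'
        obtain ⟨u, rfl⟩ := honly a haI
        obtain ⟨u', rfl⟩ := honly b hbI
        simp only [hF, Sum.elim_inl] at hadj
        exact hI' _ haI _ hbI (mS_of_ll hadj)
      by_cases hk : ∃ u : StrOld v, Sum.inl u ∈ I' ∧ G.Adj v u.1
      · obtain ⟨k, hkI, hkadj⟩ := hk
        refine ⟨I'.image F, himgind, ?_⟩
        rw [himg]
        have hterm : w (F (Sum.inl k)) - w' (Sum.inl k) = w v := by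
          rw [hfunl, if_pos hkadj]
          simp only [hF, Sum.elim_inl]
          ring
        have hle : w (F (Sum.inl k)) - w' (Sum.inl k)
            ≤ ∑ a ∈ I', (w (F a) - w' a) :=
          Finset.single_le_sum (f := fun a => w (F a) - w' a) (fun a _ => sub_nonneg.mpr (hptle a)) hkI
        have hsub : ∑ a ∈ I', (w (F a) - w' a)
            = ∑ a ∈ I', w (F a) - ∑ a ∈ I', w' a := Finset.sum_sub_distrib _ _
        linarith
      · push_neg at hk
        refine ⟨insert v (I'.image F), ?_, ?_⟩
        · intro z hz z' hz' hadj
          rcases Finset.mem_insert.mp hz with rfl | hz <;>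
            rcases Finset.mem_insert.mp hz' with rfl | hz'
          · exact G.irrefl hadj
          · obtain ⟨a, haI, rfl⟩ := Finset.mem_image.mp hz'
            obtain ⟨u, rfl⟩ := honly a haI
            simp only [hF, Sum.elim_inl] at hadj
            exact hk u haI hadj
          · obtain ⟨a, haI, rfl⟩ := Finset.mem_image.mp hz
            obtain ⟨u, rfl⟩ := honly a haI
            simp only [hF, Sum.elim_inl] at hadj
            exact hk u haI hadj.symm
          · exact himgind _ hz _ hz' hadj
        · have hvnot : v ∉ I'.image F := by
            intro hmem
            obtain ⟨a, haI, hFa⟩ := Finset.mem_image.mp hmem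
            obtain ⟨u, rfl⟩ := honly a haI
            simp only [hF, Sum.elim_inl] at hFa
            exact u.2 hFa
          rw [Finset.sum_insert hvnot, himg]
          have hle : ∑ a ∈ I', w' a ≤ ∑ a ∈ I', w (F a) :=
            Finset.sum_le_sum fun a _ => hptle a
          linarith
  linarith


/-- the modified weighted struction lowers the weighted
independence number by exactly `w v`. -/
theorem modified_weighted_struction [Fintype V] [LinearOrder V]
    (G : SimpleGraph V) (w : V → ℝ) (hw : ∀ u, 0 < w u) (v : V)
    (hv : ∀ u, (u = v ∨ G.Adj v u) → w v ≤ w u) :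
    alphaW G w = alphaW (modStruction G v) (modWeight G w v) + w v :=
  le_antisymm (partA G w hw v hv) (partB G w hw v hv)
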